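/- For any left R-module M and any right R-module N: if the character module N⁺ belongs to the flat-precover completing domain of M, then N belongs to the subinjectivity domain of M⁺. -/

import Mathlib

open CategoryTheory

universe u

variable {R : Type u} [Ring R]

/-- The submodule of relations defining the balanced tensor product `W ⊗_R M` of a
right `R`-module `W` and a left `R`-module `M` as a quotient of `W ⊗_ℤ M`. -/
abbrev tensorRel (W : Type u) [AddCommGroup W] [Module Rᵐᵒᵖ W]
    (M : Type u) [AddCommGroup M] [Module R M] : Submodule ℤ (TensorProduct ℤ W M) :=
  Submodule.span ℤ
    {x | ∃ (w : W) (r : R) (m : M), x = (MulOpposite.op r • w) ⊗ₜ[ℤ] m - w ⊗ₜ[ℤ] (r • m)}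

/-- The balanced tensor product `W ⊗_R M` over the (possibly noncommutative) ring `R`. -/
abbrev RTensor (W : Type u) [AddCommGroup W] [Module Rᵐᵒᵖ W]
    (M : Type u) [AddCommGroup M] [Module R M] : Type u :=
  TensorProduct ℤ W M ⧸ tensorRel (R := R) W M

/-- The map `W ⊗_R M → K ⊗_R M` induced by a morphism `i : W → K` of right
`R`-modules. -/
noncomputable def tensorMap {W K : Type u} [AddCommGroup W] [Module Rᵐᵒᵖ W]
    [AddCommGroup K] [Module Rᵐᵒᵖ K] (i : W →ₗ[Rᵐᵒᵖ] K)
    (M : Type u) [AddCommGroup M] [Module R M] :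
    RTensor (R := R) W M →ₗ[ℤ] RTensor (R := R) K M :=
  Submodule.mapQ _ _ (LinearMap.rTensor M i.toAddMonoidHom.toIntLinearMap) (by
    refine Submodule.span_le.2 ?_
    rintro x ⟨w, r, m, rfl⟩
    refine Submodule.mem_comap.2 (Submodule.subset_span ?_)
    refine ⟨i w, r, m, ?_⟩
    refine (LinearMap.map_sub _ _ _).trans ?_
    simp [LinearMap.rTensor_tmul, map_smul])

/-- `M` is a flat left `R`-module: tensoring with `M` preserves injectivity of
morphisms of right `R`-modules. -/
def IsFlat (M : Type u) [AddCommGroup M] [Module R M] : Prop :=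
  ∀ (W K : Type u) [AddCommGroup W] [Module Rᵐᵒᵖ W] [AddCommGroup K] [Module Rᵐᵒᵖ K]
    (i : W →ₗ[Rᵐᵒᵖ] K), Function.Injective i → Function.Injective (tensorMap (R := R) i M)

/-- `N` belongs to the flat-precover completing domain `𝔉⁻¹(M)` of `M`:
every morphism `M ⟶ N` factors through a flat module. -/
def FlatDom (M N : ModuleCat.{u} R) : Prop :=
  ∀ f : M ⟶ N, ∃ (F : ModuleCat.{u} R) (h : M ⟶ F) (k : F ⟶ N),
    IsFlat (R := R) ↥F ∧ h ≫ k = f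

/-- The character module `L⁺ = Hom_ℤ(L, ℚ/ℤ)`. -/
abbrev Character (L : Type u) [AddCommGroup L] : Type u := L →+ AddCircle (1 : ℚ)

/-- The left `R`-module structure on the character module of a right `R`-module. -/
instance charLeftModule (L : Type u) [AddCommGroup L] [Module Rᵐᵒᵖ L] :
    Module R (Character L) where
  smul r c := c.comp (DistribMulAction.toAddMonoidHom L (MulOpposite.op r))
  one_smul c := AddMonoidHom.ext fun x => by
    show c (MulOpposite.op (1 : R) • x) = c x
    simp
  mul_smul a b c := AddMonoidHom.ext fun x => by
    show c (MulOpposite.op (a * b) • x) = c (MulOpposite.op b • MulOpposite.op a • x)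
    rw [MulOpposite.op_mul, mul_smul]
  smul_zero _ := AddMonoidHom.ext fun _ => rfl
  smul_add _ _ _ := AddMonoidHom.ext fun _ => rfl
  add_smul a b c := AddMonoidHom.ext fun x => by
    show c (MulOpposite.op (a + b) • x) = c (MulOpposite.op a • x) + c (MulOpposite.op b • x)
    rw [MulOpposite.op_add, add_smul, map_add]
  zero_smul c := AddMonoidHom.ext fun x => by
    show c (MulOpposite.op (0 : R) • x) = 0
    rw [MulOpposite.op_zero, zero_smul, map_zero]

/-- The right `R`-module structure on the character module of a left `R`-module. -/
instance charRightModule (L : Type u) [AddCommGroup L] [Module R L] :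
    Module Rᵐᵒᵖ (Character L) where
  smul s c := c.comp (DistribMulAction.toAddMonoidHom L s.unop)
  one_smul c := AddMonoidHom.ext fun x => by
    show c ((1 : Rᵐᵒᵖ).unop • x) = c x
    simp
  mul_smul a b c := AddMonoidHom.ext fun x => by
    show c ((a * b).unop • x) = c (b.unop • a.unop • x)
    rw [MulOpposite.unop_mul, mul_smul]
  smul_zero _ := AddMonoidHom.ext fun _ => rfl
  smul_add _ _ _ := AddMonoidHom.ext fun _ => rfl
  add_smul a b c := AddMonoidHom.ext fun x => by
    show c ((a + b).unop • x) = c (a.unop • x) + c (b.unop • x)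
    rw [MulOpposite.unop_add, add_smul, map_add]
  zero_smul c := AddMonoidHom.ext fun x => by
    show c ((0 : Rᵐᵒᵖ).unop • x) = 0
    rw [MulOpposite.unop_zero, zero_smul, map_zero]

/-!
The morphism `f : N → M⁺` is adjoint to a morphism `M → N⁺`, which by hypothesis factors as
`M → F → N⁺` with `F` flat. The second factor is adjoint to a morphism `N → F⁺`, i.e. to a
character of `N ⊗_R F`. Flatness makes `N ⊗_R F → E ⊗_R F` injective, so this character extends
to `E ⊗_R F` because `ℚ/ℤ` is divisible; the extension is a morphism `E → F⁺`, and composing it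
with the dual `F⁺ → M⁺` of `M → F` extends `f` along `i`.
-/

namespace Character

variable {W : Type u} [AddCommGroup W] [Module Rᵐᵒᵖ W] {M : Type u} [AddCommGroup M] [Module R M]

def flip (φ : W →ₗ[Rᵐᵒᵖ] Character M) : M →ₗ[R] Character W where
  toFun m :=
    { toFun := fun w => φ w m
      map_zero' := by simp
      map_add' := fun w w' => by simp }
  map_add' m m' := AddMonoidHom.ext fun w => by simp
  map_smul' r m := AddMonoidHom.ext fun w => by
    show φ w (r • m) = φ (MulOpposite.op r • w) m
    rw [φ.map_smul]
    rfl

def flipOp (k : M →ₗ[R] Character W) : W →ₗ[Rᵐᵒᵖ] Character M where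
  toFun w :=
    { toFun := fun m => k m w
      map_zero' := by rw [map_zero]; rfl
      map_add' := fun m m' => by rw [map_add]; rfl }
  map_add' w w' := AddMonoidHom.ext fun m => map_add (k m) w w'
  map_smul' r w := AddMonoidHom.ext fun m => by
    show k m (MulOpposite.op r.unop • w) = k (r.unop • m) w
    rw [k.map_smul]
    rfl

def dual {F : Type u} [AddCommGroup F] [Module R F] (h : M →ₗ[R] F) :
    Character F →ₗ[Rᵐᵒᵖ] Character M where
  toFun c := c.comp h.toAddMonoidHom
  map_add' _ _ := rfl
  map_smul' r c := AddMonoidHom.ext fun m => by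
    show c (r.unop • h m) = c (h (r.unop • m))
    rw [h.map_smul]

end Character

namespace RTensor

variable {W : Type u} [AddCommGroup W] [Module Rᵐᵒᵖ W] {F : Type u} [AddCommGroup F] [Module R F]

def tmul (w : W) (x : F) : RTensor (R := R) W F := Submodule.Quotient.mk (w ⊗ₜ[ℤ] x)

def liftCharacter (φ : W →ₗ[Rᵐᵒᵖ] Character F) : Character (RTensor (R := R) W F) :=
  (Submodule.liftQ _
    (TensorProduct.liftAddHom φ.toAddMonoidHom fun z w x => by simp [map_zsmul]).toIntLinearMap
    (by
      refine Submodule.span_le.2 ?_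
      rintro _ ⟨w, r, x, rfl⟩
      simp only [SetLike.mem_coe, LinearMap.mem_ker, map_sub, sub_eq_zero]
      exact congrArg (fun c : Character F => c x) (φ.map_smul (MulOpposite.op r) w))).toAddMonoidHom

@[simp]
theorem liftCharacter_tmul (φ : W →ₗ[Rᵐᵒᵖ] Character F) (w : W) (x : F) :
    liftCharacter φ (tmul w x) = φ w x :=
  rfl

def curryCharacter (D : Character (RTensor (R := R) W F)) : W →ₗ[Rᵐᵒᵖ] Character F where
  toFun w :=
    { toFun := fun x => D (tmul w x)
      map_zero' := by simp [tmul]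
      map_add' := fun x x' => by
        rw [tmul, TensorProduct.tmul_add, Submodule.Quotient.mk_add, map_add]; rfl }
  map_add' w w' := AddMonoidHom.ext fun x => by
    show D (tmul (w + w') x) = D (tmul w x) + D (tmul w' x)
    rw [tmul, TensorProduct.add_tmul, Submodule.Quotient.mk_add, map_add]; rfl
  map_smul' r w := AddMonoidHom.ext fun x => by
    show D (tmul (MulOpposite.op r.unop • w) x) = D (tmul w (r.unop • x))
    congr 1
    exact (Submodule.Quotient.eq _).2 (Submodule.subset_span ⟨w, r.unop, x, rfl⟩)

theorem tensorMap_tmul {K : Type u} [AddCommGroup K] [Module Rᵐᵒᵖ K] (i : W →ₗ[Rᵐᵒᵖ] K)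
    (w : W) (x : F) : tensorMap i F (tmul w x) = tmul (i w) x :=
  rfl

end RTensor

open RTensor in
theorem IsFlat.exists_comp_eq_character {F : Type u} [AddCommGroup F] [Module R F]
    (hF : IsFlat (R := R) F) {N E : Type u} [AddCommGroup N] [Module Rᵐᵒᵖ N] [AddCommGroup E]
    [Module Rᵐᵒᵖ E] {i : N →ₗ[Rᵐᵒᵖ] E} (hi : Function.Injective i)
    (φ : N →ₗ[Rᵐᵒᵖ] Character F) : ∃ ψ : E →ₗ[Rᵐᵒᵖ] Character F, ψ.comp i = φ := by
  obtain ⟨D, hD⟩ := (Module.Baer.of_divisible (AddCircle (1 : ℚ))).extension_property_addMonoidHom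
    (tensorMap i F).toAddMonoidHom (hF N E i hi) (liftCharacter φ)
  refine ⟨curryCharacter D, LinearMap.ext fun n => AddMonoidHom.ext fun x => ?_⟩
  calc D (tmul (i n) x) = D (tensorMap i F (tmul n x)) := by rw [tensorMap_tmul]
    _ = liftCharacter φ (tmul n x) := DFunLike.congr_fun hD (tmul n x)
    _ = φ n x := liftCharacter_tmul φ n x

theorem stmt_17 (M : ModuleCat.{u} R) (N : Type u) [AddCommGroup N] [Module Rᵐᵒᵖ N]
    (h : FlatDom M (ModuleCat.of R (Character N))) :
    ∀ (E : Type u) [AddCommGroup E] [Module Rᵐᵒᵖ E] (i : N →ₗ[Rᵐᵒᵖ] E),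
      Function.Injective i → ∀ f : N →ₗ[Rᵐᵒᵖ] Character ↥M,
        ∃ g : E →ₗ[Rᵐᵒᵖ] Character ↥M, g.comp i = f := by
  intro E _ _ i hi f
  obtain ⟨F, p, k, hF, hpk⟩ := h (ModuleCat.ofHom (Character.flip f))
  obtain ⟨ψ, hψ⟩ := hF.exists_comp_eq_character hi (Character.flipOp k.hom)
  refine ⟨(Character.dual p.hom).comp ψ, LinearMap.ext fun n => AddMonoidHom.ext fun m => ?_⟩
  calc ψ (i n) (p m) = k (p m) n := by rw [← LinearMap.comp_apply, hψ]; rfl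
    _ = f n m := congrArg (fun φ : M ⟶ ModuleCat.of R (Character N) => φ m n) hpk
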